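/- arXiv:1808.03877 — 3 statements merged into one kernel-verified Lean document; each statement's English description precedes it below -/
import Mathlib

section
/- Let f : F_q → F_p be weakly regular s-plateaued with sign ε and dual g. Then for every x ∈ F_q one has Σ_{β ∈ Supp(W_f)} ξ_p^{g(β) + Tr(βx)} = ε · η_0(−1)^n · √(p*)^{n−s} · ξ_p^{f(x)}. -/
/-!
Fourier inversion: since `x ↦ ξ_p^{Tr(βx)}` runs over all additive characters of `F_q`,
`Σ_β W_f(β) ξ_p^{Tr(βx)} = q ξ_p^{f(x)}`. On the support `W_f(β) = ε √(p*)^{n+s} ξ_p^{g(β)}`,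
so the sum in question is `q ξ_p^{f(x)} / (ε √(p*)^{n+s})`, and `√(p*)² = η₀(-1) p` turns this
into `ε η₀(-1)^n √(p*)^{n-s} ξ_p^{f(x)}`.
-/

open scoped BigOperators Classical

noncomputable section

/-- `ξ_p^j` for `j : ZMod p`, where `ξ_p = exp(2πi/p)` and the exponent `j`
is lifted to a natural number. -/
def ep (p : ℕ) (j : ZMod p) : ℂ :=
  Complex.exp (2 * Real.pi * Complex.I * (j.val : ℂ) / (p : ℂ))

/-- `√(p*)`: equal to `√p` if `p ≡ 1 (mod 4)` and to `i√p` if `p ≡ 3 (mod 4)`. -/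
def sqrtPStar (p : ℕ) : ℂ :=
  if p % 4 = 1 then ((Real.sqrt p : ℝ) : ℂ) else Complex.I * ((Real.sqrt p : ℝ) : ℂ)

/-- The quadratic character `η₀` of `F_p` (extended by `η₀(0) = 0`), with values in `ℂ`. -/
def eta0 (p : ℕ) [Fact p.Prime] (j : ZMod p) : ℂ :=
  ((quadraticChar (ZMod p) j : ℤ) : ℂ)

/-- The Walsh transform of `f : F_q → F_p`. -/
def walsh (p : ℕ) {F : Type*} [Field F] [Fintype F] [Algebra (ZMod p) F]
    (f : F → ZMod p) (β : F) : ℂ :=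
  ∑ x : F, ep p (f x - Algebra.trace (ZMod p) F (β * x))

/-- `f` is weakly regular `s`-plateaued with sign `ε` and dual `g`:
`W_f(β) = ε √(p*)^{n+s} ξ_p^{g(β)}` on the Walsh support, `W_f(β) = 0` off it,
and `g` vanishes off the Walsh support. -/
def IsWeaklyRegularPlateaued (p n s : ℕ) {F : Type*} [Field F] [Fintype F]
    [Algebra (ZMod p) F] (f : F → ZMod p) (ε : ℂ) (g : F → ZMod p) : Prop :=
  (ε = 1 ∨ ε = -1) ∧
  (∀ β : F, walsh p f β ≠ 0 →
      walsh p f β = ε * sqrtPStar p ^ (n + s) * ep p (g β)) ∧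
  (∀ β : F, walsh p f β = 0 → g β = 0)

/-- `f` lies in the class `WRP`: weakly regular `s`-plateaued with sign `ε` and dual `g`,
unbalanced, `f(0) = 0`, and `f(ax) = a^h f(x)` for some positive even `h` with
`gcd(h-1, p-1) = 1`. -/
def IsWRP (p n s : ℕ) {F : Type*} [Field F] [Fintype F]
    [Algebra (ZMod p) F] (f : F → ZMod p) (ε : ℂ) (g : F → ZMod p) : Prop :=
  IsWeaklyRegularPlateaued p n s f ε g ∧
  walsh p f 0 ≠ 0 ∧
  f 0 = 0 ∧
  ∃ h : ℕ, 0 < h ∧ Even h ∧ Nat.gcd (h - 1) (p - 1) = 1 ∧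
    ∀ (a : (ZMod p)ˣ) (x : F),
      f (algebraMap (ZMod p) F (a : ZMod p) * x) = (a : ZMod p) ^ h * f x

section Character

variable {p : ℕ} [Fact p.Prime]

lemma ep_eq_stdAddChar (j : ZMod p) : ep p j = ZMod.stdAddChar j := by
  rw [ZMod.stdAddChar_apply, ZMod.toCircle_apply, ep]

lemma ep_add (a b : ZMod p) : ep p (a + b) = ep p a * ep p b := by
  simp only [ep_eq_stdAddChar, AddChar.map_add_eq_mul]

variable (p) (F : Type*) [Field F] [Algebra (ZMod p) F]

def traceChar : AddChar F ℂ :=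
  ZMod.stdAddChar.compAddMonoidHom (Algebra.trace (ZMod p) F).toAddMonoidHom

lemma traceChar_apply (x : F) : traceChar p F x = ep p (Algebra.trace (ZMod p) F x) :=
  (ep_eq_stdAddChar _).symm

variable [Fintype F]

lemma isPrimitive_traceChar : (traceChar p F).IsPrimitive := by
  refine AddChar.IsPrimitive.of_ne_one (AddChar.ne_one_iff.mpr ?_)
  have : FiniteDimensional (ZMod p) F := Module.Finite.of_finite
  obtain ⟨a, ha⟩ := Algebra.trace_surjective (ZMod p) F 1
  refine ⟨a, ?_⟩
  rw [traceChar, AddChar.compAddMonoidHom_apply, LinearMap.toAddMonoidHom_coe, ha,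
    ← AddChar.map_zero_eq_one (ZMod.stdAddChar (N := p))]
  exact (ZMod.injective_stdAddChar (N := p)).ne one_ne_zero

lemma sum_ep_trace_mul (z : F) :
    ∑ β : F, ep p (Algebra.trace (ZMod p) F (β * z))
      = if z = 0 then (Fintype.card F : ℂ) else 0 := by
  simp only [← traceChar_apply]
  exact_mod_cast AddChar.sum_mulShift z (isPrimitive_traceChar p F)

end Character

section Walsh

variable {p : ℕ} [Fact p.Prime] {F : Type*} [Field F] [Fintype F] [Algebra (ZMod p) F]

theorem sum_walsh_mul_ep_trace (f : F → ZMod p) (x : F) :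
    ∑ β : F, walsh p f β * ep p (Algebra.trace (ZMod p) F (β * x))
      = Fintype.card F * ep p (f x) := by
  have hterm : ∀ β y : F,
      ep p (f y - Algebra.trace (ZMod p) F (β * y)) * ep p (Algebra.trace (ZMod p) F (β * x))
        = ep p (f y) * ep p (Algebra.trace (ZMod p) F (β * (x - y))) := by
    intro β y
    rw [← ep_add, ← ep_add, mul_sub, map_sub, sub_add_eq_add_sub, add_sub_assoc', add_comm]
  simp_rw [walsh, Finset.sum_mul, hterm]
  rw [Finset.sum_comm]
  simp_rw [← Finset.mul_sum, sum_ep_trace_mul, sub_eq_zero, mul_ite, mul_zero,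
    Finset.sum_ite_eq, Finset.mem_univ, if_true, mul_comm]

theorem IsWeaklyRegularPlateaued.sum_walsh_mul_ep_trace {n s : ℕ} {f g : F → ZMod p} {ε : ℂ}
    (hf : IsWeaklyRegularPlateaued p n s f ε g) (x : F) :
    ∑ β : F, walsh p f β * ep p (Algebra.trace (ZMod p) F (β * x))
      = ε * sqrtPStar p ^ (n + s) * ∑ β ∈ Finset.univ.filter (fun β : F => walsh p f β ≠ 0),
          ep p (g β + Algebra.trace (ZMod p) F (β * x)) := by
  rw [Finset.mul_sum, ← Finset.sum_filter_of_ne fun β _ hβ => left_ne_zero_of_mul hβ]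
  refine Finset.sum_congr rfl fun β hβ => ?_
  rw [hf.2.1 β (Finset.mem_filter.mp hβ).2, ep_add, mul_assoc]

end Walsh

section Constants

variable {p : ℕ} [Fact p.Prime]

lemma eta0_neg_one_sq : eta0 p (-1) ^ 2 = 1 := by
  rw [eta0]
  exact_mod_cast quadraticChar_sq_one (neg_ne_zero.mpr (one_ne_zero (α := ZMod p)))

lemma sqrtPStar_sq (hp : p ≠ 2) : sqrtPStar p ^ 2 = eta0 p (-1) * p := by
  have hchar : ringChar (ZMod p) ≠ 2 := by rwa [ZMod.ringChar_zmod_n]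
  have hsqrt : ((Real.sqrt p : ℝ) : ℂ) ^ 2 = p := by
    rw [← Complex.ofReal_pow, Real.sq_sqrt (Nat.cast_nonneg p), Complex.ofReal_natCast]
  have hodd : p % 2 = 1 := Nat.odd_iff.mp ((Fact.out : p.Prime).odd_of_ne_two hp)
  rw [eta0, quadraticChar_neg_one hchar, ZMod.card, sqrtPStar]
  rcases (by omega : p % 4 = 1 ∨ p % 4 = 3) with h4 | h4
  · simp [h4, ZMod.χ₄_nat_one_mod_four h4, hsqrt]
  · simp [h4, ZMod.χ₄_nat_three_mod_four h4, mul_pow, hsqrt]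

lemma sqrtPStar_ne_zero : sqrtPStar p ≠ 0 := by
  have hsqrt : ((Real.sqrt p : ℝ) : ℂ) ≠ 0 := by
    simpa using (Fact.out : p.Prime).ne_zero
  unfold sqrtPStar
  split_ifs <;> simp [hsqrt]

lemma sqrtPStar_pow_add_mul_pow_sub (hp : p ≠ 2) {n s : ℕ} (hs : s ≤ n) :
    sqrtPStar p ^ (n + s) * sqrtPStar p ^ (n - s) = eta0 p (-1) ^ n * p ^ n := by
  rw [← pow_add, show n + s + (n - s) = 2 * n by omega, pow_mul, sqrtPStar_sq hp, mul_pow]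

end Constants

theorem statement_0_general (p n s : ℕ) [Fact p.Prime] (hp : p ≠ 2) (hs : s ≤ n)
    {F : Type*} [Field F] [Fintype F] [Algebra (ZMod p) F]
    (hq : Fintype.card F = p ^ n)
    (f g : F → ZMod p) (ε : ℂ)
    (hf : IsWeaklyRegularPlateaued p n s f ε g) :
    ∀ x : F,
      ∑ β ∈ Finset.univ.filter (fun β : F => walsh p f β ≠ 0),
          ep p (g β + Algebra.trace (ZMod p) F (β * x))
        = ε * (eta0 p (-1)) ^ n * sqrtPStar p ^ (n - s) * ep p (f x) := by
  intro x
  have hinv := sum_walsh_mul_ep_trace f x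
  rw [hf.sum_walsh_mul_ep_trace, hq, Nat.cast_pow] at hinv
  have hε : ε ^ 2 = 1 := by rcases hf.1 with rfl | rfl <;> norm_num
  have hε0 : ε ≠ 0 := by rintro rfl; norm_num at hε
  refine mul_left_cancel₀ (mul_ne_zero hε0 (pow_ne_zero _ sqrtPStar_ne_zero)) (hinv.trans ?_)
  calc (p : ℂ) ^ n * ep p (f x)
      = ε ^ 2 * (eta0 p (-1) ^ 2) ^ n * p ^ n * ep p (f x) := by
        rw [hε, eta0_neg_one_sq, one_pow, one_mul, one_mul]
    _ = ε * sqrtPStar p ^ (n + s) * (ε * eta0 p (-1) ^ n * sqrtPStar p ^ (n - s) * ep p (f x)) := by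
        linear_combination (ε ^ 2 * eta0 p (-1) ^ n * ep p (f x)) *
          (sqrtPStar_pow_add_mul_pow_sub hp hs).symm

theorem statement_0 (p n s : ℕ) [Fact p.Prime] (hp : p ≠ 2) (hn : 0 < n) (hs : s ≤ n)
    {F : Type*} [Field F] [Fintype F] [Algebra (ZMod p) F]
    (hq : Fintype.card F = p ^ n)
    (f g : F → ZMod p) (ε : ℂ)
    (hf : IsWeaklyRegularPlateaued p n s f ε g) :
    ∀ x : F,
      ∑ β ∈ Finset.univ.filter (fun β : F => walsh p f β ≠ 0),
          ep p (g β + Algebra.trace (ZMod p) F (β * x))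
        = ε * (eta0 p (-1)) ^ n * sqrtPStar p ^ (n - s) * ep p (f x) :=
  statement_0_general p n s hp hs hq f g ε hf
end
end

section
/- Let f ∈ WRP. Then for every z ∈ F_p^* (viewed in F_q via the canonical embedding) and every β ∈ F_q: if β ∈ Supp(W_f) then zβ ∈ Supp(W_f), and if β ∉ Supp(W_f) then zβ ∉ Supp(W_f). Equivalently, the Walsh support of f is invariant under multiplication by nonzero elements of the prime field F_p. -/
open scoped BigOperators Classical

noncomputable section

/-! Write `W_f(β) = Σ_x ξ^{f(x) - Tr(βx)}` and `z = a^{h-1}`, which is possible because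
`x ↦ x^{h-1}` is a bijection of `F_p^*` when `gcd(h-1, p-1) = 1`. Substituting `x ↦ a x` and
using `f(a x) = a^h f(x)` gives `W_f(zβ) = Σ_x ξ^{a^h (f(x) - Tr(βx))}`, the image of `W_f(β)`
under the Galois automorphism `ξ ↦ ξ^{a^h}` of `ℚ(ξ)`; hence one vanishes iff the other does. -/

open Polynomial

theorem IsPrimitiveRoot.aeval_eq_zero_iff {K : Type*} [Field K] [CharZero K] {k : ℕ} (hk : 0 < k)
    {μ ν : K} (hμ : IsPrimitiveRoot μ k) (hν : IsPrimitiveRoot ν k) (P : ℚ[X]) :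
    aeval μ P = 0 ↔ aeval ν P = 0 := by
  rw [← minpoly.dvd_iff, ← minpoly.dvd_iff, ← cyclotomic_eq_minpoly_rat hμ hk,
    ← cyclotomic_eq_minpoly_rat hν hk]

theorem IsPrimitiveRoot.sum_pow_mul_eq_zero_iff {K ι : Type*} [Field K] [CharZero K]
    {k c : ℕ} (hk : 0 < k) {ζ : K} (hζ : IsPrimitiveRoot ζ k) (hc : c.Coprime k) (s : Finset ι)
    (e : ι → ℕ) : ∑ i ∈ s, ζ ^ (c * e i) = 0 ↔ ∑ i ∈ s, ζ ^ e i = 0 := by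
  have aeval_sum (μ : K) : aeval μ (∑ i ∈ s, X ^ e i : ℚ[X]) = ∑ i ∈ s, μ ^ e i := by simp
  simpa only [aeval_sum, pow_mul] using
    (hζ.pow_of_coprime c hc).aeval_eq_zero_iff hk hζ (∑ i ∈ s, X ^ e i)

theorem ep_eq_pow (p : ℕ) (j : ZMod p) :
    ep p j = Complex.exp (2 * Real.pi * Complex.I / p) ^ j.val := by
  rw [← Complex.exp_nat_mul, ep]
  ring_nf

theorem sum_ep_unit_mul_eq_zero_iff (p : ℕ) [NeZero p] {ι : Type*} (s : Finset ι)
    (u : ι → ZMod p) (c : (ZMod p)ˣ) :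
    ∑ i ∈ s, ep p (c * u i) = 0 ↔ ∑ i ∈ s, ep p (u i) = 0 := by
  have hζ := Complex.isPrimitiveRoot_exp p (NeZero.ne p)
  have ep_mul (j : ZMod p) :
      ep p (c * j) = Complex.exp (2 * Real.pi * Complex.I / p) ^ ((c : ZMod p).val * j.val) := by
    rw [ep_eq_pow, ZMod.val_mul]
    simpa only [← hζ.eq_orderOf] using
      pow_mod_orderOf (Complex.exp (2 * Real.pi * Complex.I / p)) ((c : ZMod p).val * j.val)
  simp only [ep_mul, ep_eq_pow]
  exact hζ.sum_pow_mul_eq_zero_iff (NeZero.pos p) (ZMod.val_coe_unit_coprime c) s _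

theorem walsh_algebraMap_pow_pred_mul {p : ℕ} {F : Type*} [Field F] [Fintype F]
    [Algebra (ZMod p) F] {f : F → ZMod p} {h : ℕ} (hh : 0 < h)
    (hhom : ∀ (a : (ZMod p)ˣ) (x : F),
      f (algebraMap (ZMod p) F (a : ZMod p) * x) = (a : ZMod p) ^ h * f x)
    (a : (ZMod p)ˣ) (β : F) :
    walsh p f (algebraMap (ZMod p) F ((a ^ (h - 1) : (ZMod p)ˣ) : ZMod p) * β)
      = ∑ x : F,
          ep p (((a ^ h : (ZMod p)ˣ) : ZMod p) * (f x - Algebra.trace (ZMod p) F (β * x))) := by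
  let A := algebraMap (ZMod p) F
  rw [walsh, ← Equiv.sum_comp (Units.mulLeft (Units.map A.toMonoidHom a))]
  refine Finset.sum_congr rfl fun x _ => ?_
  have hpow : (a : ZMod p) ^ (h - 1) * a = (a : ZMod p) ^ h := by
    rw [← pow_succ, Nat.sub_add_cancel hh]
  have harg : A (a ^ (h - 1) : (ZMod p)ˣ) * β * (A a * x) = A ((a : ZMod p) ^ h) * (β * x) := by
    rw [Units.val_pow_eq_pow_val, ← hpow, map_mul]
    ring
  simp only [Units.mulLeft_apply, Units.coe_map, RingHom.toMonoidHom_eq_coe,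
    MonoidHom.coe_coe]
  rw [hhom, harg, ← Algebra.smul_def, map_smul, smul_eq_mul, Units.val_pow_eq_pow_val, mul_sub]

theorem walsh_algebraMap_mul_eq_zero_iff {p : ℕ} [Fact p.Prime] {F : Type*} [Field F]
    [Fintype F] [Algebra (ZMod p) F] {f : F → ZMod p} {h : ℕ} (hh : 0 < h)
    (hgcd : Nat.gcd (h - 1) (p - 1) = 1)
    (hhom : ∀ (a : (ZMod p)ˣ) (x : F),
      f (algebraMap (ZMod p) F (a : ZMod p) * x) = (a : ZMod p) ^ h * f x)
    (z : (ZMod p)ˣ) (β : F) :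
    walsh p f (algebraMap (ZMod p) F (z : ZMod p) * β) = 0 ↔ walsh p f β = 0 := by
  have hcop : (Nat.card (ZMod p)ˣ).Coprime (h - 1) := by
    rw [Nat.card_eq_fintype_card, ZMod.card_units]
    exact Nat.coprime_comm.mp hgcd
  obtain ⟨a, rfl⟩ := (powCoprime hcop).surjective z
  rw [powCoprime_apply, walsh_algebraMap_pow_pred_mul hh hhom, walsh]
  exact sum_ep_unit_mul_eq_zero_iff p _ _ _

theorem statement_2_general (p n s : ℕ) [Fact p.Prime]
    {F : Type*} [Field F] [Fintype F] [Algebra (ZMod p) F]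
    (f g : F → ZMod p) (ε : ℂ)
    (hf : IsWRP p n s f ε g) :
    ∀ (z : (ZMod p)ˣ) (β : F),
      (walsh p f β ≠ 0 →
        walsh p f (algebraMap (ZMod p) F (z : ZMod p) * β) ≠ 0) ∧
      (walsh p f β = 0 →
        walsh p f (algebraMap (ZMod p) F (z : ZMod p) * β) = 0) := by
  obtain ⟨-, -, -, h, hh, -, hgcd, hhom⟩ := hf
  intro z β
  have hiff := walsh_algebraMap_mul_eq_zero_iff hh hgcd hhom z β
  exact ⟨mt hiff.mp, hiff.mpr⟩

theorem statement_2 (p n s : ℕ) [Fact p.Prime] (hp : p ≠ 2) (hn : 0 < n) (hs : s ≤ n)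
    {F : Type*} [Field F] [Fintype F] [Algebra (ZMod p) F]
    (hq : Fintype.card F = p ^ n)
    (f g : F → ZMod p) (ε : ℂ)
    (hf : IsWRP p n s f ε g) :
    ∀ (z : (ZMod p)ˣ) (β : F),
      (walsh p f β ≠ 0 →
        walsh p f (algebraMap (ZMod p) F (z : ZMod p) * β) ≠ 0) ∧
      (walsh p f β = 0 →
        walsh p f (algebraMap (ZMod p) F (z : ZMod p) * β) = 0) :=
  statement_2_general p n s f g ε hf
end
end

section
/- Let f ∈ WRP with dual g. Then g(0) = 0. -/
open scoped BigOperators Classical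

noncomputable section

lemma parity_even' {F : Type*} [Field F] [Fintype F] {G : Type*} [AddCommGroup G] [DecidableEq G]
    (h2 : (2 : F) ≠ 0)
    (f : F → G) (hf0 : f 0 = 0) (hneg : ∀ x, f (-x) = f x) (k : G) (hk : k ≠ 0) :
    Even (Finset.filter (fun z : F × F => f z.1 + f z.2 = k) Finset.univ).card := by
  have hX : ∀ x : F, -x = x → x = 0 := by
    intro x hx
    have h : (2 : F) * x = 0 := by rw [two_mul]; nth_rewrite 1 [← hx]; ring
    rcases mul_eq_zero.mp h with h | h
    · exact absurd h h2
    · exact h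
  set S := Finset.filter (fun z : F × F => f z.1 + f z.2 = k) Finset.univ with hS
  have hmem : ∀ z : F × F, z ∈ S → ((-z.1, -z.2) : F × F) ∈ S := by
    intro z hz
    simp only [hS, Finset.mem_filter, Finset.mem_univ, true_and] at hz ⊢
    rw [hneg, hneg]; exact hz
  have hsum : ((S.card : ℕ) : ZMod 2) = 0 := by
    rw [Finset.card_eq_sum_ones, Nat.cast_sum]
    refine Finset.sum_involution (fun z _ => ((-z.1, -z.2) : F × F)) ?_ ?_ hmem ?_
    · intro a ha; decide
    · intro z hz _
      intro hzz
      have h1 : z.1 = 0 := hX _ (congrArg Prod.fst hzz)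
      have h2' : z.2 = 0 := hX _ (congrArg Prod.snd hzz)
      have : z ∈ S := hz
      simp only [hS, Finset.mem_filter, h1, h2', hf0, add_zero] at this
      exact hk this.2.symm
    · intro z hz; simp
  rw [even_iff_two_dvd]
  exact (ZMod.natCast_eq_zero_iff _ 2).mp hsum

lemma parity_odd' {F : Type*} [Field F] [Fintype F] {G : Type*} [AddCommGroup G] [DecidableEq G]
    (h2 : (2 : F) ≠ 0)
    (f : F → G) (hf0 : f 0 = 0) (hneg : ∀ x, f (-x) = f x) :
    Odd (Finset.filter (fun z : F × F => f z.1 + f z.2 = 0) Finset.univ).card := by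
  have hX : ∀ x : F, -x = x → x = 0 := by
    intro x hx
    have h : (2 : F) * x = 0 := by rw [two_mul]; nth_rewrite 1 [← hx]; ring
    rcases mul_eq_zero.mp h with h | h
    · exact absurd h h2
    · exact h
  set S := Finset.filter (fun z : F × F => f z.1 + f z.2 = 0) Finset.univ with hS
  have h00 : ((0, 0) : F × F) ∈ S := by
    simp [hS, hf0]
  set S' := S.erase ((0,0) : F × F) with hS'
  have hmem : ∀ z : F × F, z ∈ S' → ((-z.1, -z.2) : F × F) ∈ S' := by
    intro z hz
    rw [hS', Finset.mem_erase] at hz ⊢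
    constructor
    · intro hc
      apply hz.1
      have h1 : z.1 = 0 := by have := congrArg Prod.fst hc; simpa using neg_eq_zero.mp this
      have hb : z.2 = 0 := by have := congrArg Prod.snd hc; simpa using neg_eq_zero.mp this
      exact Prod.ext h1 hb
    · have hz2 := hz.2
      simp only [hS, Finset.mem_filter, Finset.mem_univ, true_and] at hz2 ⊢
      rw [hneg, hneg]; exact hz2
  have hsum : ((S'.card : ℕ) : ZMod 2) = 0 := by
    rw [Finset.card_eq_sum_ones, Nat.cast_sum]
    refine Finset.sum_involution (fun z _ => ((-z.1, -z.2) : F × F)) ?_ ?_ hmem ?_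
    · intro a ha; decide
    · intro z hz _
      intro hzz
      have h1 : z.1 = 0 := hX _ (congrArg Prod.fst hzz)
      have h2' : z.2 = 0 := hX _ (congrArg Prod.snd hzz)
      rw [hS', Finset.mem_erase] at hz
      exact hz.1 (Prod.ext h1 h2')
    · intro z hz; simp
  have heven : Even S'.card := by
    rw [even_iff_two_dvd]
    exact (ZMod.natCast_eq_zero_iff _ 2).mp hsum
  have hcard : S'.card + 1 = S.card := Finset.card_erase_add_one h00
  rw [← hcard]
  exact Even.add_one heven

theorem statement_3 (p n s : ℕ) [Fact p.Prime] (hp : p ≠ 2) (hn : 0 < n) (hs : s ≤ n)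
    {F : Type*} [Field F] [Fintype F] [Algebra (ZMod p) F]
    (hq : Fintype.card F = p ^ n)
    (f g : F → ZMod p) (ε : ℂ)
    (hf : IsWRP p n s f ε g) :
    g 0 = 0 := by
  classical
  by_contra hg0
  obtain ⟨⟨hε, hsupp, -⟩, hW0, hf0, h, hhpos, hheven, -, hhom⟩ := hf
  have hpp : p.Prime := Fact.out
  haveI : NeZero p := ⟨hpp.ne_zero⟩
  have hp2 : (2 : ZMod p) ≠ 0 := by
    intro hc
    have hd := (ZMod.natCast_eq_zero_iff 2 p).mp (by exact_mod_cast hc)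
    exact hp ((Nat.prime_dvd_prime_iff_eq hpp Nat.prime_two).mp hd)
  have h2F : (2 : F) ≠ 0 := by
    intro hc
    apply hp2
    have h2' : algebraMap (ZMod p) F 2 = 0 := by rw [map_ofNat]; exact hc
    exact (map_eq_zero_iff _ (algebraMap (ZMod p) F).injective).mp h2' 
  -- f(-x) = f(x)
  have hneg : ∀ x : F, f (-x) = f x := by
    intro x
    have := hhom (-1) x
    rw [Units.val_neg, Units.val_one] at this
    rw [map_neg, map_one, neg_one_mul] at this
    rw [this, (hheven.neg_one_pow : ((-1 : ZMod p)) ^ h = 1), one_mul]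
  -- ξ and ep facts
  set ξ : ℂ := Complex.exp (2 * Real.pi * Complex.I / p) with hξdef
  have hξ : IsPrimitiveRoot ξ p := Complex.isPrimitiveRoot_exp p hpp.ne_zero
  have hep : ∀ j : ZMod p, ep p j = ξ ^ j.val := by
    intro j
    unfold ep
    rw [hξdef, ← Complex.exp_nat_mul]
    ring_nf
  have hpow : ∀ m : ℕ, ξ ^ m = ξ ^ (m % p) := by
    intro m
    conv_lhs => rw [← Nat.div_add_mod m p]
    rw [pow_add, pow_mul, hξ.pow_eq_one, one_pow, one_mul]
  have hepadd : ∀ a b : ZMod p, ep p (a + b) = ep p a * ep p b := by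
    intro a b
    rw [hep, hep, hep, ← pow_add, ZMod.val_add, ← hpow]
  -- Walsh at 0
  have hA : walsh p f 0 = ∑ x : F, ep p (f x) := by
    unfold walsh
    refine Finset.sum_congr rfl fun x _ => ?_
    rw [zero_mul, map_zero, sub_zero]
  -- the squared Walsh value in terms of T and u
  set m := n + s with hm
  set T : ℚ := (if p % 4 = 1 then (p : ℚ) else -(p : ℚ)) ^ m with hT
  set u : ℕ := (2 * g 0).val with hu
  have hSsq : (sqrtPStar p) ^ 2 = ((if p % 4 = 1 then (p : ℚ) else -(p : ℚ) : ℚ) : ℂ) := by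
    unfold sqrtPStar
    split_ifs with h4
    · rw [sq, ← Complex.ofReal_mul, Real.mul_self_sqrt (by positivity)]
      norm_cast
    · rw [mul_pow, Complex.I_sq, sq, ← Complex.ofReal_mul,
        Real.mul_self_sqrt (by positivity)]
      push_cast
      ring
  have hε2 : ε ^ 2 = 1 := by rcases hε with rfl | rfl <;> norm_num
  have hWsq : (walsh p f 0) ^ 2 = ((T : ℚ) : ℂ) * ξ ^ u := by
    rw [hsupp 0 hW0]
    have : (ε * sqrtPStar p ^ m * ep p (g 0)) ^ 2
        = ε ^ 2 * ((sqrtPStar p ^ 2) ^ m) * (ep p (g 0) * ep p (g 0)) := by ring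
    rw [this, hε2, one_mul, hSsq, ← hepadd, ← two_mul, hep, hT]
    push_cast
    ring
  -- counting decomposition
  set M : ZMod p → ℕ := fun k =>
    (Finset.filter (fun z : F × F => f z.1 + f z.2 = k) Finset.univ).card with hM
  have hWsq2 : (walsh p f 0) ^ 2 = ∑ k : ZMod p, (M k : ℂ) * ξ ^ (k.val) := by
    rw [hA, sq, Finset.sum_mul_sum]
    have : ∑ i : F, ∑ j : F, ep p (f i) * ep p (f j)
        = ∑ z : F × F, ep p (f z.1 + f z.2) := by
      rw [← Finset.sum_product']
      exact Finset.sum_congr rfl fun z _ => (hepadd _ _).symm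
    rw [this, ← Finset.sum_fiberwise' (Finset.univ) (fun z : F × F => f z.1 + f z.2)
      (fun k => ep p k)]
    refine Finset.sum_congr rfl fun k _ => ?_
    rw [Finset.sum_const, nsmul_eq_mul, hep, hM]
  have key : ∑ k : ZMod p, ((M k : ℚ) : ℂ) * ξ ^ (k.val) = ((T : ℚ) : ℂ) * ξ ^ u := by
    rw [← hWsq, hWsq2]
    push_cast
    rfl
  -- polynomial
  open Polynomial in
  set P : ℚ[X] := (∑ k : ZMod p, C ((M k : ℚ)) * X ^ (k.val)) - C T * X ^ u with hP
  have hPeval : Polynomial.aeval ξ P = 0 := by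
    rw [hP]
    simp only [map_sub, map_sum, map_mul, map_pow, Polynomial.aeval_C, Polynomial.aeval_X]
    rw [sub_eq_zero]
    have hcast : ∀ q : ℚ, algebraMap ℚ ℂ q = (q : ℂ) := fun q => by
      simp [eq_ratCast]
    simp only [hcast]
    exact key
  have hdvd : Polynomial.cyclotomic p ℚ ∣ P := by
    rw [Polynomial.cyclotomic_eq_minpoly_rat hξ hpp.pos]
    exact minpoly.dvd ℚ ξ hPeval
  -- coefficients of P
  have hcoeff : ∀ i : ℕ, i < p → P.coeff i = (M (i : ZMod p) : ℚ) - if i = u then T else 0 := by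
    intro i hi
    rw [hP, Polynomial.coeff_sub, Polynomial.finset_sum_coeff]
    congr 1
    · rw [Finset.sum_eq_single ((i : ZMod p))]
      · rw [Polynomial.coeff_C_mul, Polynomial.coeff_X_pow, ZMod.val_cast_of_lt hi,
          if_pos rfl, mul_one]
      · intro k _ hk
        rw [Polynomial.coeff_C_mul, Polynomial.coeff_X_pow, if_neg, mul_zero]
        intro hik
        exact hk (by rw [hik, ZMod.natCast_rightInverse k])
      · intro hmem; exact absurd (Finset.mem_univ _) hmem
    · rw [Polynomial.coeff_C_mul, Polynomial.coeff_X_pow]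
      split_ifs <;> simp
  -- index facts
  have hg2 : (2 : ZMod p) * g 0 ≠ 0 := fun hc => by
    rcases mul_eq_zero.mp hc with hc | hc
    · exact hp2 hc
    · exact hg0 hc
  have hune0 : u ≠ 0 := by
    rw [hu]
    intro hc
    exact hg2 (by rwa [← ZMod.val_eq_zero])
  have hval_inj : ∀ a b : ZMod p, a.val = b.val → a = b := by
    intro a b hab
    have := congrArg (Nat.cast : ℕ → ZMod p) hab
    rwa [ZMod.natCast_rightInverse a, ZMod.natCast_rightInverse b] at this
  have hune1 : u ≠ (g 0).val := by
    intro hc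
    apply hg0
    have h2g : (2 : ZMod p) * g 0 = g 0 := hval_inj _ _ hc
    have : (2 - 1 : ZMod p) * g 0 = 0 := by rw [sub_mul, h2g]; ring
    norm_num at this
    exact this
  have hg0val : (g 0).val ≠ 0 := fun hc => hg0 (by rwa [← ZMod.val_eq_zero])
  -- degree analysis
  have hdegP : P.degree ≤ ((p - 1 : ℕ) : WithBot ℕ) := by
    rw [hP]
    apply le_trans (Polynomial.degree_sub_le _ _)
    apply max_le
    · apply le_trans (Polynomial.degree_sum_le _ _)
      apply Finset.sup_le
      intro k _
      apply le_trans (Polynomial.degree_C_mul_X_pow_le _ _)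
      exact_mod_cast Nat.le_sub_one_of_lt (ZMod.val_lt k)
    · apply le_trans (Polynomial.degree_C_mul_X_pow_le _ _)
      exact_mod_cast Nat.le_sub_one_of_lt (ZMod.val_lt (2 * g 0))
  have hΦdeg : (Polynomial.cyclotomic p ℚ).degree = ((p - 1 : ℕ) : WithBot ℕ) := by
    rw [Polynomial.degree_cyclotomic, Nat.totient_prime hpp]
  have hΦcoeff : ∀ i : ℕ, i < p → (Polynomial.cyclotomic p ℚ).coeff i = 1 := by
    intro i hi
    rw [Polynomial.cyclotomic_prime, Polynomial.finset_sum_coeff]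
    simp only [Polynomial.coeff_X_pow]
    rw [Finset.sum_eq_single i]
    · simp
    · intro k _ hk; rw [if_neg (fun hik => hk hik.symm)]
    · intro hmem; exact absurd (Finset.mem_range.mpr hi) hmem
  -- conclude M 0 = M (g 0)
  obtain ⟨Q, hQ⟩ := hdvd
  have hMM : (M 0 : ℚ) = (M (g 0) : ℚ) := by
    by_cases hP0 : P = 0
    · have h1 := hcoeff 0 hpp.pos
      have h2 := hcoeff (g 0).val (ZMod.val_lt _)
      rw [hP0] at h1 h2
      simp only [Polynomial.coeff_zero] at h1 h2
      rw [if_neg (fun hc => hune0 hc.symm)] at h1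
      rw [if_neg (fun hc => hune1 hc.symm)] at h2
      rw [ZMod.natCast_rightInverse (g 0)] at h2
      simp only [Nat.cast_zero] at h1
      linarith [h1, h2]
    · have hQ0 : Q ≠ 0 := fun hc => hP0 (by rw [hQ, hc, mul_zero])
      have hΦ0 : Polynomial.cyclotomic p ℚ ≠ 0 := Polynomial.cyclotomic_ne_zero p ℚ
      have hdegQ : Q.degree ≤ 0 := by
        have hdm : P.degree = (Polynomial.cyclotomic p ℚ).degree + Q.degree := by
          rw [hQ, Polynomial.degree_mul]
        rw [hdm, hΦdeg] at hdegP
        have hdQ : Q.degree = (Q.natDegree : WithBot ℕ) := Polynomial.degree_eq_natDegree hQ0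
        rw [hdQ, ← Nat.cast_add] at hdegP
        have hk : p - 1 + Q.natDegree ≤ p - 1 := by exact_mod_cast hdegP
        have hk0 : Q.natDegree = 0 := by omega
        rw [hdQ, hk0]
        exact_mod_cast le_rfl
      have hQC : Q = Polynomial.C (Q.coeff 0) := Polynomial.eq_C_of_degree_le_zero hdegQ
      have hcoeffr : ∀ i : ℕ, i < p → P.coeff i = Q.coeff 0 := by
        intro i hi
        conv_lhs => rw [hQ, hQC]
        rw [Polynomial.coeff_mul_C, hΦcoeff i hi, one_mul]
      have h1 := (hcoeff 0 hpp.pos).symm.trans (hcoeffr 0 hpp.pos)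
      have h2 := (hcoeff (g 0).val (ZMod.val_lt _)).symm.trans
        (hcoeffr (g 0).val (ZMod.val_lt _))
      rw [if_neg (fun hc => hune0 hc.symm)] at h1
      rw [if_neg (fun hc => hune1 hc.symm)] at h2
      rw [ZMod.natCast_rightInverse (g 0)] at h2
      simp only [Nat.cast_zero] at h1 h2
      linarith [h1, h2]
  have hMM' : M 0 = M (g 0) := by exact_mod_cast hMM
  -- parity contradiction
  have hodd : Odd (M 0) := by
    simpa only [hM, Finset.filter_congr_decidable] using parity_odd' h2F f hf0 hneg
  have heven : Even (M (g 0)) := by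
    simpa only [hM, Finset.filter_congr_decidable] using parity_even' h2F f hf0 hneg (g 0) hg0
  rw [hMM'] at hodd
  exact (Nat.not_odd_iff_even.mpr heven) hodd
end
end
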